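/- Let U₁ ∈ ℝ^{d1×r1} and U₂ ∈ ℝ^{d2×r2} have orthonormal columns, let T ≥ 1, and for t = 1,…,T let A_t, B_t ∈ ℝ^{r1×r2}, and set M_t = U₁A_tU₂ᵀ ∈ ℝ^{d1×d2} and N_t = U₁B_tU₂ᵀ ∈ ℝ^{d1×d2}. Then ‖Σ_{t=1}^{T} mat₁(M_t ⊗ N_t)‖₂ = ‖Σ_{t=1}^{T} mat₁(A_t ⊗ B_t)‖₂. -/

import Mathlib

open Matrix

/-- The spectral norm (largest singular value) of a real matrix, i.e. the operator
norm of the associated linear map between Euclidean spaces. -/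
noncomputable def specNorm {m n : Type*} [Fintype m] [Fintype n] [DecidableEq n]
    (A : Matrix m n ℝ) : ℝ :=
  ‖LinearMap.toContinuousLinearMap (Matrix.toEuclideanLin A)‖

/-- The mode-1 matricization mat₁(A ⊗ B) of the order-4 tensor product of two matrices:
its rows are indexed by the row index of A, its columns by triples (j1, i2, j2), with
entries A i1 j1 * B i2 j2. -/
def mat1Kron {d1 d2 e1 e2 : ℕ} (A : Matrix (Fin d1) (Fin d2) ℝ)
    (B : Matrix (Fin e1) (Fin e2) ℝ) :
    Matrix (Fin d1) (Fin d2 × Fin e1 × Fin e2) ℝ :=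
  fun i1 p => A i1 p.1 * B p.2.1 p.2.2

/-- The Frobenius norm of a real matrix. -/
noncomputable def frobNorm {a b : Type*} [Fintype a] [Fintype b] (A : Matrix a b ℝ) : ℝ :=
  Real.sqrt (∑ i, ∑ j, (A i j) ^ 2)

/-- The Frobenius inner product ⟨A, B⟩_F = tr(AᵀB) of two real matrices. -/
def frobInner {a b : Type*} [Fintype a] [Fintype b] (A B : Matrix a b ℝ) : ℝ :=
  ∑ i, ∑ j, A i j * B i j

/-!
Matricization is linear on both sides: mat₁(U₁A U₂ᵀ ⊗ U₁B U₂ᵀ) = U₁ · mat₁(A ⊗ B) · (U₂ ⊗ U₁ ⊗ U₂)ᵀ,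
and the Kronecker product U₂ ⊗ U₁ ⊗ U₂ again has orthonormal columns. Multiplying by a matrix
with orthonormal columns on the left (or by its transpose on the right) preserves the spectral
norm, by the C⋆-identity ‖UA‖² = ‖AᴴUᴴUA‖ = ‖AᴴA‖ = ‖A‖².
-/

open scoped Kronecker Matrix.Norms.L2Operator

namespace Matrix

theorem kronecker_transpose_mul_self_eq_one {R l m n p : Type*} [CommSemiring R]
    [Fintype l] [Fintype n] [DecidableEq m] [DecidableEq p]
    {P : Matrix l m R} {Q : Matrix n p R} (hP : Pᵀ * P = 1) (hQ : Qᵀ * Q = 1) :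
    (P ⊗ₖ Q)ᵀ * (P ⊗ₖ Q) = 1 := by
  rw [← kroneckerMap_transpose, ← mul_kronecker_mul, hP, hQ, one_kronecker_one]

section L2OpNorm

variable {𝕜 l m n : Type*} [RCLike 𝕜] [Fintype l] [Fintype m] [Fintype n]
  [DecidableEq l] [DecidableEq n]

theorem l2_opNorm_mul_of_conjTranspose_mul_self_eq_one {U : Matrix m n 𝕜} (hU : Uᴴ * U = 1)
    (A : Matrix n l 𝕜) : ‖U * A‖ = ‖A‖ := by
  refine (mul_self_inj (norm_nonneg _) (norm_nonneg _)).mp ?_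
  rw [← l2_opNorm_conjTranspose_mul_self, ← l2_opNorm_conjTranspose_mul_self, conjTranspose_mul,
    Matrix.mul_assoc, ← Matrix.mul_assoc Uᴴ, hU, Matrix.one_mul]

theorem l2_opNorm_mul_conjTranspose_of_conjTranspose_mul_self_eq_one [DecidableEq m]
    {V : Matrix l n 𝕜} (hV : Vᴴ * V = 1) (A : Matrix m n 𝕜) : ‖A * Vᴴ‖ = ‖A‖ := by
  rw [← l2_opNorm_conjTranspose, conjTranspose_mul, conjTranspose_conjTranspose,
    l2_opNorm_mul_of_conjTranspose_mul_self_eq_one hV, l2_opNorm_conjTranspose]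

end L2OpNorm

end Matrix

theorem specNorm_eq_l2_opNorm {m n : Type*} [Fintype m] [Fintype n] [DecidableEq n]
    (A : Matrix m n ℝ) : specNorm A = ‖A‖ :=
  rfl

theorem mat1Kron_mul_left {d0 d1 d2 e1 e2 : ℕ} (X : Matrix (Fin d0) (Fin d1) ℝ)
    (A : Matrix (Fin d1) (Fin d2) ℝ) (B : Matrix (Fin e1) (Fin e2) ℝ) :
    mat1Kron (X * A) B = X * mat1Kron A B := by
  ext i p
  simp [mat1Kron, Matrix.mul_apply, Finset.sum_mul, mul_assoc]

theorem mat1Kron_mul_kronecker_transpose {d1 d2 e1 e2 f1 f2 f3 : ℕ}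
    (A : Matrix (Fin d1) (Fin d2) ℝ) (B : Matrix (Fin e1) (Fin e2) ℝ)
    (P : Matrix (Fin f1) (Fin d2) ℝ) (Q : Matrix (Fin f2) (Fin e1) ℝ)
    (R : Matrix (Fin f3) (Fin e2) ℝ) :
    mat1Kron A B * (P ⊗ₖ (Q ⊗ₖ R))ᵀ = mat1Kron (A * Pᵀ) (Q * B * Rᵀ) := by
  ext i p
  simp only [mat1Kron, Matrix.mul_apply, Matrix.transpose_apply, kroneckerMap_apply,
    Fintype.sum_prod_type, Finset.sum_mul, Finset.mul_sum]
  rw [Finset.sum_comm_cycle]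
  refine Finset.sum_congr rfl fun j2 _ => ?_
  rw [Finset.sum_comm]
  refine Finset.sum_congr rfl fun i2 _ => Finset.sum_congr rfl fun j1 _ => ?_
  ring

theorem stmt7_general (d1 d2 r1 r2 T : ℕ)
    (U1 : Matrix (Fin d1) (Fin r1) ℝ) (U2 : Matrix (Fin d2) (Fin r2) ℝ)
    (hU1 : U1ᵀ * U1 = 1) (hU2 : U2ᵀ * U2 = 1)
    (A B : Fin T → Matrix (Fin r1) (Fin r2) ℝ) :
    specNorm (∑ t, mat1Kron (U1 * A t * U2ᵀ) (U1 * B t * U2ᵀ)) =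
      specNorm (∑ t, mat1Kron (A t) (B t)) := by
  have hV : (U2 ⊗ₖ (U1 ⊗ₖ U2))ᵀ * (U2 ⊗ₖ (U1 ⊗ₖ U2)) = 1 :=
    kronecker_transpose_mul_self_eq_one hU2 (kronecker_transpose_mul_self_eq_one hU1 hU2)
  have hsum : ∑ t, mat1Kron (U1 * A t * U2ᵀ) (U1 * B t * U2ᵀ)
      = U1 * (∑ t, mat1Kron (A t) (B t)) * (U2 ⊗ₖ (U1 ⊗ₖ U2))ᵀ := by
    rw [Matrix.mul_sum, Matrix.sum_mul]
    refine Finset.sum_congr rfl fun t _ => ?_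
    rw [Matrix.mul_assoc U1 (mat1Kron _ _), mat1Kron_mul_kronecker_transpose, ← mat1Kron_mul_left,
      Matrix.mul_assoc]
  rw [← conjTranspose_eq_transpose_of_trivial] at hU1 hV
  rw [specNorm_eq_l2_opNorm, specNorm_eq_l2_opNorm, hsum, Matrix.mul_assoc,
    l2_opNorm_mul_of_conjTranspose_mul_self_eq_one hU1, ← conjTranspose_eq_transpose_of_trivial,
    l2_opNorm_mul_conjTranspose_of_conjTranspose_mul_self_eq_one hV]

/-- with U₁, U₂ having orthonormal columns and M_t = U₁A_tU₂ᵀ,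
N_t = U₁B_tU₂ᵀ, the spectral norm of Σ_t mat₁(M_t ⊗ N_t) equals that of
Σ_t mat₁(A_t ⊗ B_t). -/
theorem stmt7 (d1 d2 r1 r2 T : ℕ) (hT : 1 ≤ T)
    (U1 : Matrix (Fin d1) (Fin r1) ℝ) (U2 : Matrix (Fin d2) (Fin r2) ℝ)
    (hU1 : U1ᵀ * U1 = 1) (hU2 : U2ᵀ * U2 = 1)
    (A B : Fin T → Matrix (Fin r1) (Fin r2) ℝ) :
    specNorm (∑ t, mat1Kron (U1 * A t * U2ᵀ) (U1 * B t * U2ᵀ)) =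
      specNorm (∑ t, mat1Kron (A t) (B t)) :=
  stmt7_general d1 d2 r1 r2 T U1 U2 hU1 hU2 A B
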